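/- arXiv:1010.0418 — 6 statements merged into one kernel-verified Lean document; each statement's English description precedes it below -/
import Mathlib

section
/- Let S be a finite set and l a positive integer. If a function f : S^l → [0,1] satisfies ∑_{s^l ∈ S^l} f(s^l) q(s_1)···q(s_l) ≥ 1 − γ for every probability distribution q on S that is a type of a sequence in S^l (i.e., an empirical distribution of some element of S^l) and some γ ∈ [0,1], then for every s^l ∈ S^l, (1/l!) ∑_{σ ∈ Perm_l} f(σ(s^l)) ≥ 1 − (l+1)^{|S|} · γ, where σ(s^l)_i := s_{σ(i)}. -/
/-- The empirical distribution (type) of the sequence `t : Fin l → S`. -/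
noncomputable def empDist {S : Type*} [Fintype S] [DecidableEq S] {l : ℕ}
    (t : Fin l → S) (s : S) : ℝ :=
  ((Finset.univ.filter fun i => t i = s).card : ℝ) / l

/-!
Fix `t` and let `q` be its type. Under `q^l` the type class `T` of `t` (the orbit of `t` under
`Perm_l`) has the largest mass `K` among all type classes, and there are at most `(l+1)^|S|`
type classes, so `K ≥ (l+1)^{-|S|}`. Since `f ≤ 1` and `q^l` is constant on `T`, the hypothesis
for `q` gives `K - γ ≤ K · avg_T f`, and `avg_T f` is the permutation average of `f` at `t`.
-/

open Finset Equiv Nat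

section TypeCount
variable {α S : Type*} [Fintype α] [DecidableEq S]

def typeCount (x : α → S) (s : S) : ℕ := #{a | x a = s}

lemma typeCount_le (x : α → S) (s : S) : typeCount x s ≤ Fintype.card α :=
  card_filter_le _ _

lemma sum_typeCount [Fintype S] (x : α → S) : ∑ s, typeCount x s = Fintype.card α :=
  (card_eq_sum_card_fiberwise fun a _ => mem_univ (x a)).symm

lemma prod_comp_eq_prod_pow_typeCount [Fintype S] {M : Type*} [CommMonoid M]
    (x : α → S) (g : S → M) : ∏ a, g (x a) = ∏ s, g s ^ typeCount x s := by
  rw [← prod_fiberwise' univ x g]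
  simp only [prod_const, typeCount]

lemma typeCount_comp_perm (x : α → S) (σ : Perm α) : typeCount (x ∘ σ) = typeCount x := by
  funext s
  simp only [typeCount, ← Fintype.card_subtype]
  exact Fintype.card_congr (σ.subtypeEquiv fun _ => Iff.rfl)

lemma exists_perm_comp_eq_of_typeCount_eq {x y : α → S} (h : typeCount x = typeCount y) :
    ∃ σ : Perm α, x ∘ σ = y := by
  have hcard : ∀ s, Fintype.card {a // y a = s} = Fintype.card {a // x a = s} := by
    simpa only [Fintype.card_subtype, typeCount] using fun s => congrFun h.symm s
  refine ⟨(sigmaFiberEquiv y).symm.trans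
    ((sigmaCongrRight fun s => Fintype.equivOfCardEq (hcard s)).trans (sigmaFiberEquiv x)), ?_⟩
  funext a
  exact ((Fintype.equivOfCardEq (hcard (y a))) ⟨a, rfl⟩).2

lemma card_perm_comp_eq [DecidableEq α] {x y : α → S} {σ₀ : Perm α} (h : x ∘ σ₀ = y) :
    Fintype.card {σ : Perm α // x ∘ σ = y} = Fintype.card {σ : Perm α // x ∘ σ = x} := by
  refine (Fintype.card_congr ((Equiv.mulRight σ₀).subtypeEquiv fun σ => ?_)).symm
  rw [← h, coe_mulRight, Perm.coe_mul, ← Function.comp_assoc]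
  exact σ₀.surjective.injective_comp_right.eq_iff.symm

end TypeCount

section TypeClass
variable {α S : Type*} [Fintype α] [DecidableEq α] [Fintype S] [DecidableEq S]

def typeClass (x : α → S) : Finset (α → S) := {y | typeCount y = typeCount x}

lemma mem_typeClass {x y : α → S} : y ∈ typeClass x ↔ typeCount y = typeCount x := by
  simp [typeClass]

lemma self_mem_typeClass (x : α → S) : x ∈ typeClass x :=
  mem_typeClass.mpr rfl

lemma mem_typeClass_iff_exists_perm {x y : α → S} :
    y ∈ typeClass x ↔ ∃ σ : Perm α, x ∘ σ = y := by
  refine mem_typeClass.trans ⟨fun h => exists_perm_comp_eq_of_typeCount_eq h.symm, ?_⟩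
  rintro ⟨σ, rfl⟩
  exact typeCount_comp_perm x σ

lemma sum_comp_perm {M : Type*} [AddCommMonoid M] (x : α → S) (g : (α → S) → M) :
    ∑ σ : Perm α, g (x ∘ σ) = (∏ s, (typeCount x s)!) • ∑ y ∈ typeClass x, g y := by
  have himage : univ.image (fun σ : Perm α => x ∘ σ) = typeClass x := by
    ext y
    simp [mem_typeClass_iff_exists_perm]
  rw [Finset.sum_comp, himage, smul_sum]
  refine sum_congr rfl fun y hy => ?_
  obtain ⟨σ₀, hσ₀⟩ := mem_typeClass_iff_exists_perm.mp hy
  rw [← Fintype.card_subtype, card_perm_comp_eq hσ₀, DomMulAct.stabilizer_card]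
  simp only [Fintype.card_subtype, typeCount]

lemma card_typeClass_mul_prod_factorial (x : α → S) :
    #(typeClass x) * ∏ s, (typeCount x s)! = (Fintype.card α)! := by
  have h := sum_comp_perm x fun _ => 1
  simp only [sum_const, smul_eq_mul, mul_one] at h
  rw [Finset.card_univ, Fintype.card_perm] at h
  rw [h, mul_comm]

lemma sum_comp_perm_div_factorial (x : α → S) (g : (α → S) → ℝ) :
    (∑ σ : Perm α, g (x ∘ σ)) / (Fintype.card α)! =
      (∑ y ∈ typeClass x, g y) / #(typeClass x) := by
  have hx : (#(typeClass x) : ℝ) ≠ 0 := by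
    exact_mod_cast (card_pos.mpr ⟨x, self_mem_typeClass x⟩).ne'
  rw [sum_comp_perm, ← card_typeClass_mul_prod_factorial x, nsmul_eq_mul]
  push_cast
  field_simp

lemma prod_comp_eq_of_mem_typeClass {M : Type*} [CommMonoid M] {x y : α → S}
    (hy : y ∈ typeClass x) (q : S → M) : ∏ a, q (y a) = ∏ a, q (x a) := by
  rw [prod_comp_eq_prod_pow_typeCount, prod_comp_eq_prod_pow_typeCount, mem_typeClass.mp hy]

lemma sum_typeClass_prod {R : Type*} [CommSemiring R] (x : α → S) (q : S → R) :
    ∑ y ∈ typeClass x, ∏ a, q (y a) = #(typeClass x) * ∏ a, q (x a) := by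
  rw [sum_congr rfl fun y hy => prod_comp_eq_of_mem_typeClass hy q, sum_const, nsmul_eq_mul]

lemma sum_typeClass_prod_eq_factorial_mul (x : α → S) (q : S → ℝ) :
    ∑ y ∈ typeClass x, ∏ a, q (y a) =
      (Fintype.card α)! * ∏ s, q s ^ typeCount x s / (typeCount x s)! := by
  have : (∏ s, ((typeCount x s)! : ℝ)) ≠ 0 := by positivity
  rw [sum_typeClass_prod, prod_comp_eq_prod_pow_typeCount, prod_div_distrib,
    ← card_typeClass_mul_prod_factorial x]
  push_cast
  field_simp

lemma one_le_mul_of_sum_typeClass_le {p : (α → S) → ℝ} (hp : ∑ x, p x = 1) {K : ℝ}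
    (hK : ∀ x, ∑ y ∈ typeClass x, p y ≤ K) :
    1 ≤ ((Fintype.card α : ℝ) + 1) ^ Fintype.card S * K := by
  set C := univ.image (typeCount : (α → S) → S → ℕ)
  have hCK : 1 ≤ #C * K := calc
    1 = ∑ c ∈ C, ∑ y with typeCount y = c, p y := by
      rw [sum_fiberwise_of_maps_to fun x _ => mem_image_of_mem _ (mem_univ x), hp]
    _ ≤ #C • K := by
      refine sum_le_card_nsmul _ _ _ ?_
      simp only [C, forall_mem_image, mem_univ, forall_const]
      exact hK
    _ = #C * K := nsmul_eq_mul _ _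
  have hC : #C ≤ (Fintype.card α + 1) ^ Fintype.card S := calc
    #C ≤ #(Fintype.piFinset fun _ : S => range (Fintype.card α + 1)) := by
      refine card_le_card fun c hc => ?_
      obtain ⟨x, -, rfl⟩ := mem_image.mp hc
      simpa [Nat.lt_succ_iff] using typeCount_le x
    _ = (Fintype.card α + 1) ^ Fintype.card S := by simp
  have hK0 : 0 ≤ K := (pos_of_mul_pos_right (one_pos.trans_le hCK) (by positivity)).le
  calc (1 : ℝ) ≤ #C * K := hCK
    _ ≤ ((Fintype.card α : ℝ) + 1) ^ Fintype.card S * K := by gcongr; exact_mod_cast hC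

end TypeClass

lemma pow_mul_factorial_le (a b : ℕ) : a ^ b * a ! ≤ a ^ a * b ! := by
  rcases le_total b a with hba | hab
  · obtain ⟨d, rfl⟩ := Nat.exists_eq_add_of_le hba
    have h : b ! * (b + d).descFactorial d = (b + d)! := by
      simpa using factorial_mul_descFactorial (Nat.le_add_left d b)
    calc (b + d) ^ b * (b + d)! ≤ (b + d) ^ b * (b ! * (b + d) ^ d) := by
          rw [← h]; gcongr; exact descFactorial_le_pow _ _
      _ = (b + d) ^ (b + d) * b ! := by ring
  · obtain ⟨d, rfl⟩ := Nat.exists_eq_add_of_le hab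
    calc a ^ (a + d) * a ! = a ^ a * (a ! * a ^ d) := by ring
      _ ≤ a ^ a * (a + d)! := by
          gcongr; simpa using factorial_mul_pow_sub_le_factorial (Nat.le_add_right a d)

lemma pow_div_factorial_le (a b : ℕ) : (a : ℝ) ^ b / b ! ≤ a ^ a / a ! := by
  rw [div_le_div_iff₀ (by positivity) (by positivity)]
  exact_mod_cast pow_mul_factorial_le a b

lemma sub_le_mul_sum_of_le_sum_mul {ι : Type*} [Fintype ι] [DecidableEq ι] {A : Finset ι}
    {f p : ι → ℝ} {c γ : ℝ} (hf : ∀ i, f i ≤ 1) (hp : ∀ i, 0 ≤ p i) (hp1 : ∑ i, p i = 1)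
    (hA : ∀ i ∈ A, p i = c) (h : 1 - γ ≤ ∑ i, f i * p i) :
    ∑ i ∈ A, p i - γ ≤ c * ∑ i ∈ A, f i := by
  have hcompl : ∑ i ∈ Aᶜ, f i * p i ≤ ∑ i ∈ Aᶜ, p i :=
    sum_le_sum fun i _ => mul_le_of_le_one_left (hp i) (hf i)
  have hA' : ∑ i ∈ A, f i * p i = c * ∑ i ∈ A, f i := by
    rw [mul_sum]
    exact sum_congr rfl fun i hi => by rw [hA i hi, mul_comm]
  rw [← sum_compl_add_sum A] at h hp1
  linarith

section EmpiricalDistribution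
variable {S : Type*} [Fintype S] [DecidableEq S] {l : ℕ}

lemma empDist_eq_typeCount_div (t : Fin l → S) (s : S) : empDist t s = typeCount t s / l :=
  rfl

lemma sum_prod_empDist (hl : 0 < l) (t : Fin l → S) :
    ∑ x : Fin l → S, ∏ i, empDist t (x i) = 1 := by
  have hsum : ∑ s, empDist t s = 1 := by
    simp only [empDist_eq_typeCount_div]
    rw [← sum_div, ← Nat.cast_sum, sum_typeCount, Fintype.card_fin, div_self (by positivity)]
  rw [← Fintype.prod_sum, hsum, prod_const_one]

lemma prod_empDist_pow_div_factorial (t x : Fin l → S) :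
    ∏ s, empDist t s ^ typeCount x s / (typeCount x s)! =
      (∏ s, (typeCount t s : ℝ) ^ typeCount x s / (typeCount x s)!) / (l : ℝ) ^ l := calc
  _ = ∏ s, ((typeCount t s : ℝ) ^ typeCount x s / (typeCount x s)!) / (l : ℝ) ^ typeCount x s := by
    refine prod_congr rfl fun s _ => ?_
    rw [empDist_eq_typeCount_div, div_pow, div_div, div_div, mul_comm]
  _ = _ := by rw [prod_div_distrib, prod_pow_eq_pow_sum, sum_typeCount, Fintype.card_fin]

lemma sum_typeClass_prod_empDist_le (t x : Fin l → S) :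
    ∑ y ∈ typeClass x, ∏ i, empDist t (y i) ≤ ∑ y ∈ typeClass t, ∏ i, empDist t (y i) := by
  simp only [sum_typeClass_prod_eq_factorial_mul, prod_empDist_pow_div_factorial]
  gcongr _ * ((∏ s, ?_) / _) with s
  exact pow_div_factorial_le _ _

end EmpiricalDistribution

/-- Robustification technique: if `f : S^l → [0,1]` satisfies
`∑_{s^l} f(s^l) q(s_1)⋯q(s_l) ≥ 1-γ` for every type `q` of a sequence in `S^l`
(i.e. every empirical distribution `empDist t`), then for every `s^l`,
`(1/l!) ∑_{σ ∈ Perm_l} f(σ(s^l)) ≥ 1 - (l+1)^{|S|}·γ`, where `σ(s^l)_i = s_{σ(i)}`. -/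
theorem stmt_0 {S : Type*} [Fintype S] [DecidableEq S] (l : ℕ) (hl : 0 < l)
    (f : (Fin l → S) → ℝ) (hf : ∀ sl, f sl ∈ Set.Icc (0 : ℝ) 1)
    (γ : ℝ) (hγ : γ ∈ Set.Icc (0 : ℝ) 1)
    (h : ∀ t : Fin l → S, ∑ sl : Fin l → S, f sl * ∏ i, empDist t (sl i) ≥ 1 - γ) :
    ∀ sl : Fin l → S,
      (1 / (Nat.factorial l : ℝ)) * ∑ σ : Equiv.Perm (Fin l), f (sl ∘ σ) ≥
        1 - ((l : ℝ) + 1) ^ (Fintype.card S) * γ := by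
  intro t
  set p : (Fin l → S) → ℝ := fun y => ∏ i, empDist t (y i)
  set K := ∑ y ∈ typeClass t, p y
  set F := ∑ y ∈ typeClass t, f y
  have hMK : 1 ≤ ((l : ℝ) + 1) ^ Fintype.card S * K := by
    simpa using one_le_mul_of_sum_typeClass_le (sum_prod_empDist hl t)
      (sum_typeClass_prod_empDist_le t)
  have hK0 : 0 < K := pos_of_mul_pos_right (one_pos.trans_le hMK) (by positivity)
  have hKF : K - γ ≤ p t * F :=
    sub_le_mul_sum_of_le_sum_mul (fun y => (hf y).2)
      (fun y => prod_nonneg fun i _ => div_nonneg (Nat.cast_nonneg _) (Nat.cast_nonneg _))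
      (sum_prod_empDist hl t) (fun y hy => prod_comp_eq_of_mem_typeClass hy _) (h t)
  have hc0 : (#(typeClass t) : ℝ) ≠ 0 := by
    exact_mod_cast (card_pos.mpr ⟨t, self_mem_typeClass t⟩).ne'
  have hKavg : K * (F / #(typeClass t)) = p t * F := by
    have hK : K = #(typeClass t) * p t := sum_typeClass_prod t (empDist t)
    rw [hK]
    field_simp
  have havg := sum_comp_perm_div_factorial t f
  rw [Fintype.card_fin] at havg
  rw [one_div_mul_eq_div, havg, ge_iff_le, ← mul_le_mul_iff_of_pos_left hK0]
  nlinarith [mul_le_mul_of_nonneg_right hMK hγ.1]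
end

section
/- For every probability distribution q on a finite set S that is a type of a sequence of length l (i.e., q(s) = N(s)/l for nonnegative integers N(s) summing to l), the product measure q^{⊗l} assigns to the type class T_q^l = {s^l ∈ S^l : the empirical distribution of s^l equals q} at least probability 1/(l+1)^{|S|}. -/
open Finset Nat

theorem Nat.factorial_mul_pow_le_factorial_mul_pow (m n : ℕ) : n ! * n ^ m ≤ m ! * n ^ n := by
  rcases le_total n m with h | h
  · calc n ! * n ^ m = n ! * n ^ (m - n) * n ^ n := by
          rw [mul_assoc, ← pow_add, Nat.sub_add_cancel h]
      _ ≤ m ! * n ^ n := Nat.mul_le_mul_right _ (factorial_mul_pow_sub_le_factorial h)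
  · calc n ! * n ^ m = m ! * n.descFactorial (n - m) * n ^ m := by
          rw [← factorial_mul_descFactorial (Nat.sub_le n m), Nat.sub_sub_self h]
      _ ≤ m ! * n ^ (n - m) * n ^ m := by gcongr; exact descFactorial_le_pow ..
      _ = m ! * n ^ n := by rw [mul_assoc, ← pow_add, Nat.sub_add_cancel h]

section Multinomial

variable {ι : Type*} [Fintype ι]

theorem Nat.multinomial_mul_prod_pow_le {k N : ι → ℕ} (h : ∑ i, k i = ∑ i, N i) :
    multinomial univ k * ∏ i, N i ^ k i ≤ multinomial univ N * ∏ i, N i ^ N i := by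
  refine Nat.le_of_mul_le_mul_right (c := (∏ i, (k i)!) * ∏ i, (N i)!) ?_ (by positivity)
  calc (multinomial univ k * ∏ i, N i ^ k i) * ((∏ i, (k i)!) * ∏ i, (N i)!)
      = (∑ i, N i)! * ∏ i, ((N i)! * N i ^ k i) := by
        rw [← h, ← multinomial_spec, prod_mul_distrib]; ring
    _ ≤ (∑ i, N i)! * ∏ i, ((k i)! * N i ^ N i) := by
        gcongr (_ * ?_)
        exact prod_le_prod' fun i _ => factorial_mul_pow_le_factorial_mul_pow ..
    _ = (multinomial univ N * ∏ i, N i ^ N i) * ((∏ i, (k i)!) * ∏ i, (N i)!) := by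
        rw [← multinomial_spec, prod_mul_distrib]; ring

theorem multinomial_mul_prod_div_pow_le {k N : ι → ℕ} {n : ℕ} (hk : ∑ i, k i = n)
    (hN : ∑ i, N i = n) :
    multinomial univ k * ∏ i, ((N i : ℝ) / n) ^ k i ≤
      multinomial univ N * ∏ i, ((N i : ℝ) / n) ^ N i := by
  simp_rw [div_pow, prod_div_distrib, prod_pow_eq_pow_sum, hk, hN, ← mul_div_assoc]
  refine div_le_div_of_nonneg_right ?_ (by positivity)
  exact_mod_cast Nat.multinomial_mul_prod_pow_le (hk.trans hN.symm)

theorem card_piAntidiag_univ_le [DecidableEq ι] (n : ℕ) :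
    #(piAntidiag (univ : Finset ι) n) ≤ (n + 1) ^ Fintype.card ι := by
  calc #(piAntidiag (univ : Finset ι) n)
      ≤ #(Fintype.piFinset fun _ : ι => range (n + 1)) := by
        refine card_le_card fun k hk => Fintype.mem_piFinset.2 fun i => mem_range.2 ?_
        rw [Nat.lt_succ_iff, ← (mem_piAntidiag.1 hk).1]
        exact single_le_sum (fun _ _ => Nat.zero_le _) (mem_univ i)
    _ = (n + 1) ^ Fintype.card ι := by simp

theorem one_le_succ_pow_card_mul_multinomial_mul_prod_pow [DecidableEq ι] {N : ι → ℕ} {n : ℕ}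
    (hN : ∑ i, N i = n) :
    1 ≤ ((n : ℝ) + 1) ^ Fintype.card ι * (multinomial univ N * ∏ i, ((N i : ℝ) / n) ^ N i) := by
  have htotal : (∑ i, (N i : ℝ) / n) ^ n = 1 := by
    rcases eq_or_ne n 0 with rfl | hn
    · exact pow_zero _
    rw [← sum_div, ← Nat.cast_sum, hN, div_self (by positivity), one_pow]
  calc (1 : ℝ)
      = ∑ k ∈ piAntidiag univ n, multinomial univ k * ∏ i, ((N i : ℝ) / n) ^ k i := by
        rw [← htotal, sum_pow_eq_sum_piAntidiag]
    _ ≤ ∑ _k ∈ piAntidiag univ n, multinomial univ N * ∏ i, ((N i : ℝ) / n) ^ N i :=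
        sum_le_sum fun k hk => multinomial_mul_prod_div_pow_le (mem_piAntidiag.1 hk).1 hN
    _ = #(piAntidiag univ n) * (multinomial univ N * ∏ i, ((N i : ℝ) / n) ^ N i) := by
        rw [sum_const, nsmul_eq_mul]
    _ ≤ ((n : ℝ) + 1) ^ Fintype.card ι * (multinomial univ N * ∏ i, ((N i : ℝ) / n) ^ N i) := by
        gcongr
        exact_mod_cast card_piAntidiag_univ_le n

end Multinomial

section Orbit

variable {α ι : Type*} [Fintype α] [Fintype ι] [DecidableEq ι]

theorem sum_card_fiber_eq_card (f : α → ι) :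
    ∑ i, Fintype.card {a // f a = i} = Fintype.card α := by
  rw [← Fintype.card_sigma, Fintype.card_congr (Equiv.sigmaFiberEquiv f)]

/-- Orbit-stabilizer: the stabilizer of `f` permutes each fibre of `f` separately. -/
theorem card_image_comp_perm [DecidableEq α] (f : α → ι) :
    #(univ.image fun σ : Equiv.Perm α => f ∘ σ) =
      multinomial univ fun i => Fintype.card {a // f a = i} := by
  have horbit : MulAction.orbit (Equiv.Perm α)ᵈᵐᵃ f =
      ↑(univ.image fun σ : Equiv.Perm α => f ∘ σ) := by
    ext v
    simp only [MulAction.mem_orbit_iff, coe_image, coe_univ, Set.image_univ, Set.mem_range]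
    exact DomMulAct.mk.surjective.exists
  have hstab : Nat.card (MulAction.stabilizer (Equiv.Perm α)ᵈᵐᵃ f) =
      Fintype.card {σ : Equiv.Perm α // f ∘ σ = f} := by
    rw [← Nat.card_eq_fintype_card]
    exact Nat.card_congr (Equiv.subtypeEquiv DomMulAct.mk.symm fun _ => DomMulAct.mem_stabilizer_iff)
  have h := (MulAction.stabilizer (Equiv.Perm α)ᵈᵐᵃ f).card_mul_index
  rw [MulAction.index_stabilizer, horbit, Set.ncard_coe_finset, hstab, DomMulAct.stabilizer_card,
    Nat.card_congr DomMulAct.mk.symm, Nat.card_perm, Nat.card_eq_fintype_card,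
    ← sum_card_fiber_eq_card f, ← multinomial_spec] at h
  exact Nat.eq_of_mul_eq_mul_left (by positivity) h

end Orbit

section TypeClass

variable {S : Type*} [Fintype S] [DecidableEq S] {l : ℕ}

theorem empDist_eq_card_fiber_div (t : Fin l → S) (s : S) :
    empDist t s = (Fintype.card {i // t i = s} : ℝ) / l := by
  rw [empDist, Fintype.card_subtype]

theorem empDist_comp_perm (t : Fin l → S) (σ : Equiv.Perm (Fin l)) :
    empDist (t ∘ σ) = empDist t := by
  ext s
  simp only [empDist_eq_card_fiber_div]
  congr 2
  exact Fintype.card_congr (σ.subtypeEquiv fun _ => Iff.rfl)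

open Classical in
theorem card_image_comp_perm_mul_prod_le (t : Fin l → S) :
    #(univ.image fun σ : Equiv.Perm (Fin l) => t ∘ σ) * ∏ i, empDist t (t i) ≤
      ∑ sl : Fin l → S, (if empDist sl = empDist t then ∏ i, empDist t (sl i) else 0) := by
  have hconst : ∀ v ∈ univ.image fun σ : Equiv.Perm (Fin l) => t ∘ σ,
      ∏ i, empDist t (v i) = ∏ i, empDist t (t i) := by
    simp only [mem_image, mem_univ, true_and]
    rintro v ⟨σ, rfl⟩
    exact Equiv.prod_comp σ fun i => empDist t (t i)
  calc #(univ.image fun σ : Equiv.Perm (Fin l) => t ∘ σ) * ∏ i, empDist t (t i)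
      = ∑ v ∈ univ.image fun σ : Equiv.Perm (Fin l) => t ∘ σ, ∏ i, empDist t (v i) := by
        rw [sum_congr rfl hconst, sum_const, nsmul_eq_mul]
    _ ≤ ∑ v with empDist v = empDist t, ∏ i, empDist t (v i) := by
        refine sum_le_sum_of_subset_of_nonneg ?_ fun v _ _ => ?_
        · simp only [subset_iff, mem_image, mem_univ, true_and, mem_filter]
          rintro _ ⟨σ, rfl⟩
          exact empDist_comp_perm t σ
        · exact prod_nonneg fun i _ => by rw [empDist]; positivity
    _ = _ := sum_filter _ _

end TypeClass

open Classical in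
theorem stmt_1_general {S : Type*} [Fintype S] [DecidableEq S] (l : ℕ)
    (t : Fin l → S) :
    ∑ sl : Fin l → S,
        (if empDist sl = empDist t then ∏ i, empDist t (sl i) else 0) ≥
      1 / ((l : ℝ) + 1) ^ (Fintype.card S) := by
  set N : S → ℕ := fun s => Fintype.card {i // t i = s}
  have hprod : ∏ i, empDist t (t i) = ∏ s, ((N s : ℝ) / l) ^ N s := by
    rw [← Fintype.prod_fiberwise' t (empDist t)]
    simp only [prod_const, Finset.card_univ, empDist_eq_card_fiber_div, N]
  rw [ge_iff_le, div_le_iff₀' (by positivity)]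
  calc 1 ≤ ((l : ℝ) + 1) ^ Fintype.card S * (multinomial univ N * ∏ s, ((N s : ℝ) / l) ^ N s) :=
        one_le_succ_pow_card_mul_multinomial_mul_prod_pow
          ((sum_card_fiber_eq_card t).trans (Fintype.card_fin l))
    _ ≤ _ := by
        gcongr
        rw [← hprod, ← card_image_comp_perm]
        exact card_image_comp_perm_mul_prod_le t

open Classical in
/-- for every type `q = empDist t` of a sequence of length `l`, the product
measure `q^{⊗l}` of its type class `{s^l : empirical distribution of s^l = q}` is at least
`1/(l+1)^{|S|}`. -/
theorem stmt_1 {S : Type*} [Fintype S] [DecidableEq S] (l : ℕ) (hl : 0 < l)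
    (t : Fin l → S) :
    ∑ sl : Fin l → S,
        (if empDist sl = empDist t then ∏ i, empDist t (sl i) else 0) ≥
      1 / ((l : ℝ) + 1) ^ (Fintype.card S) :=
  stmt_1_general l t
end

section
/- Let H_A, H_B be finite-dimensional Hilbert spaces with dimensions d_A, d_B, let ρ be a separable state on ℂ^k ⊗ ℂ^k, and let φ_k = (1/√k) ∑_{i=1}^k e_i ⊗ e_i be a maximally entangled state vector. Then ⟨φ_k, ρ φ_k⟩ ≤ 1/k. -/
/-! The functional `ρ ↦ Re ⟨φ_k, ρ φ_k⟩` is real-linear, so it suffices to bound it on product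
states `σ ⊗ τ`, where it equals `(1/k) Re ∑ᵢⱼ σᵢⱼ τᵢⱼ`. Positive semidefiniteness gives
`|σᵢⱼ|² ≤ σᵢᵢ σⱼⱼ`, and Cauchy–Schwarz over the pairs `(i, j)`, pairing `σᵢᵢ τⱼⱼ` with `σⱼⱼ τᵢᵢ`,
bounds `∑ᵢⱼ |σᵢⱼ| |τᵢⱼ|` by `tr σ · tr τ = 1`. -/

open scoped ComplexOrder

/-- A density operator: positive semidefinite with trace one. -/
def IsState {γ : Type*} [Fintype γ] [DecidableEq γ] (ρ : Matrix γ γ ℂ) : Prop :=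
  ρ.PosSemidef ∧ ρ.trace = 1

/-- The product (Kronecker) operator `σ ⊗ τ` on a bipartite system. -/
def prodOp {α β : Type*} (σ : Matrix α α ℂ) (τ : Matrix β β ℂ) :
    Matrix (α × β) (α × β) ℂ :=
  Matrix.of fun p q => σ p.1 q.1 * τ p.2 q.2

/-- A bipartite state is separable if it lies in the convex hull of the product states. -/
def SepState {α β : Type*} [Fintype α] [DecidableEq α] [Fintype β] [DecidableEq β]
    (ρ : Matrix (α × β) (α × β) ℂ) : Prop :=
  ρ ∈ convexHull ℝ
    {M : Matrix (α × β) (α × β) ℂ | ∃ σ τ, IsState σ ∧ IsState τ ∧ M = prodOp σ τ}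

/-- The maximally entangled state vector `φ_k = (1/√k) ∑ᵢ eᵢ ⊗ eᵢ` on `ℂᵏ ⊗ ℂᵏ`. -/
noncomputable def maxEntVec (k : ℕ) : Fin k × Fin k → ℂ :=
  fun p => if p.1 = p.2 then ((1 / Real.sqrt k : ℝ) : ℂ) else 0

namespace Matrix.PosSemidef
variable {n 𝕜 : Type*} [Fintype n] [DecidableEq n] [RCLike 𝕜]

lemma norm_apply_sq_le {A : Matrix n n 𝕜} (hA : A.PosSemidef) (i j : n) :
    ‖A i j‖ ^ 2 ≤ RCLike.re (A i i) * RCLike.re (A j j) := by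
  -- Cauchy–Schwarz for the semi-inner product `⟪x, y⟫ = xᴴ A y`, at `x = eᵢ`, `y = eⱼ`.
  let := A.toSeminormedAddCommGroup hA
  let := A.toInnerProductSpace hA
  have h := inner_mul_inner_self_le (𝕜 := 𝕜) (Pi.single i (1 : 𝕜) : n → 𝕜) (Pi.single j 1)
  have key : ∀ a b : n, (inner 𝕜 (Pi.single a (1 : 𝕜) : n → 𝕜) (Pi.single b 1)) = A a b := by
    intro a b
    change (A *ᵥ Pi.single b 1) ⬝ᵥ star (Pi.single a 1) = A a b
    simp [mulVec_single]
  rw [key, key, key, key] at h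
  rwa [← hA.isHermitian.apply j i, norm_star, ← sq] at h

lemma re_sum_apply_mul_apply_le {σ τ : Matrix n n 𝕜} (hσ : σ.PosSemidef) (hτ : τ.PosSemidef) :
    RCLike.re (∑ i, ∑ j, σ i j * τ i j) ≤ RCLike.re σ.trace * RCLike.re τ.trace := by
  set s : n → ℝ := fun i => RCLike.re (σ i i)
  set t : n → ℝ := fun i => RCLike.re (τ i i)
  have hs : ∀ i, 0 ≤ s i := fun i => (RCLike.nonneg_iff.mp hσ.diag_nonneg).1
  have ht : ∀ i, 0 ≤ t i := fun i => (RCLike.nonneg_iff.mp hτ.diag_nonneg).1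
  have hsum : ∀ f g : n → ℝ, ∑ p : n × n, f p.1 * g p.2 = (∑ i, f i) * ∑ j, g j := fun f g => by
    rw [Fintype.sum_prod_type, Finset.sum_mul_sum]
  have htr : RCLike.re σ.trace * RCLike.re τ.trace = (∑ i, s i) * ∑ j, t j := by
    simp only [Matrix.trace, Matrix.diag, map_sum, s, t]
  have hre : RCLike.re (∑ i, ∑ j, σ i j * τ i j) ≤ ∑ p : n × n, ‖σ p.1 p.2‖ * ‖τ p.1 p.2‖ := by
    rw [Fintype.sum_prod_type]
    simp only [map_sum, ← norm_mul]
    gcongr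
    exact RCLike.re_le_norm _
  have hcs : (∑ p : n × n, ‖σ p.1 p.2‖ * ‖τ p.1 p.2‖) ^ 2 ≤
      (∑ p : n × n, s p.1 * t p.2) * ∑ p : n × n, t p.1 * s p.2 := by
    refine Finset.sum_sq_le_sum_mul_sum_of_sq_le_mul _ (fun p _ => mul_nonneg (hs _) (ht _))
      (fun p _ => mul_nonneg (ht _) (hs _)) fun p _ => ?_
    calc (‖σ p.1 p.2‖ * ‖τ p.1 p.2‖) ^ 2 = ‖σ p.1 p.2‖ ^ 2 * ‖τ p.1 p.2‖ ^ 2 := mul_pow _ _ _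
      _ ≤ (s p.1 * s p.2) * (t p.1 * t p.2) :=
        mul_le_mul (hσ.norm_apply_sq_le _ _) (hτ.norm_apply_sq_le _ _) (by positivity)
          (mul_nonneg (hs _) (hs _))
      _ = s p.1 * t p.2 * (t p.1 * s p.2) := by ring
  rw [hsum, hsum, mul_comm (∑ i, t i), ← sq, ← htr] at hcs
  refine hre.trans ((pow_le_pow_iff_left₀ (by positivity) ?_ two_ne_zero).mp hcs)
  rw [htr]
  exact mul_nonneg (Finset.sum_nonneg fun i _ => hs i) (Finset.sum_nonneg fun i _ => ht i)

end Matrix.PosSemidef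

noncomputable def expectationRe {ι : Type*} [Fintype ι] (φ : ι → ℂ) : Matrix ι ι ℂ →ₗ[ℝ] ℝ where
  toFun M := (∑ p, ∑ q, starRingEnd ℂ (φ p) * M p q * φ q).re
  map_add' M N := by
    simp only [Matrix.add_apply, mul_add, add_mul, Finset.sum_add_distrib, Complex.add_re]
  map_smul' c M := by
    simp only [Matrix.smul_apply, Complex.real_smul, mul_assoc, mul_left_comm _ (c : ℂ),
      ← Finset.mul_sum, Complex.re_ofReal_mul, RingHom.id_apply, smul_eq_mul]

lemma expectationRe_maxEntVec_prodOp (k : ℕ) (σ τ : Matrix (Fin k) (Fin k) ℂ) :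
    expectationRe (maxEntVec k) (prodOp σ τ) = (∑ i, ∑ j, σ i j * τ i j).re / k := by
  have hφ : ∀ p : Fin k × Fin k,
      maxEntVec k p = if p.1 = p.2 then (((Real.sqrt k)⁻¹ : ℝ) : ℂ) else 0 := by
    simp [maxEntVec]
  have hscale : ∀ z : ℂ, (((Real.sqrt k)⁻¹ : ℝ) : ℂ) * z * (((Real.sqrt k)⁻¹ : ℝ) : ℂ) =
      (((k : ℝ)⁻¹ : ℝ) : ℂ) * z := fun z => by
    rw [mul_right_comm, ← Complex.ofReal_mul, ← mul_inv, Real.mul_self_sqrt k.cast_nonneg]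
  simp only [expectationRe, LinearMap.coe_mk, AddHom.coe_mk, hφ, prodOp, Matrix.of_apply,
    Fintype.sum_prod_type, apply_ite (starRingEnd ℂ), map_zero, Complex.conj_ofReal,
    ite_mul, mul_ite, zero_mul, mul_zero, Finset.sum_ite_irrel, Finset.sum_const_zero,
    Finset.sum_ite_eq, Finset.mem_univ, if_true, hscale, ← Finset.mul_sum, Complex.re_ofReal_mul]
  rw [inv_mul_eq_div]

theorem stmt_9_general (k : ℕ) (ρ : Matrix (Fin k × Fin k) (Fin k × Fin k) ℂ)
    (hsep : SepState ρ) :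
    (∑ p, ∑ q, (starRingEnd ℂ) (maxEntVec k p) * ρ p q * maxEntVec k q).re ≤
      1 / (k : ℝ) := by
  have hprod : ∀ M ∈ {M : Matrix (Fin k × Fin k) (Fin k × Fin k) ℂ |
      ∃ σ τ, IsState σ ∧ IsState τ ∧ M = prodOp σ τ}, expectationRe (maxEntVec k) M ≤ 1 / k := by
    rintro _ ⟨σ, τ, ⟨hσ, hσ_tr⟩, ⟨hτ, hτ_tr⟩, rfl⟩
    rw [expectationRe_maxEntVec_prodOp]
    gcongr
    simpa [hσ_tr, hτ_tr] using hσ.re_sum_apply_mul_apply_le hτ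
  exact convexHull_min hprod (convex_halfSpace_le (expectationRe _).isLinear _) hsep

/-- for any separable state `ρ` on `ℂᵏ ⊗ ℂᵏ` and the maximally entangled
vector `φ_k`, one has `⟨φ_k, ρ φ_k⟩ ≤ 1/k`. -/
theorem stmt_9 (k : ℕ) (hk : 0 < k) (ρ : Matrix (Fin k × Fin k) (Fin k × Fin k) ℂ)
    (hρ : IsState ρ) (hsep : SepState ρ) :
    (∑ p, ∑ q, (starRingEnd ℂ) (maxEntVec k p) * ρ p q * maxEntVec k q).re ≤
      1 / (k : ℝ) :=
  stmt_9_general k ρ hsep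
end

section
/- Let ρ be a bipartite state in the relative interior of the set of states S(H_A ⊗ H_B). Then for every l ∈ ℕ, the maximal dimension d(l,ρ) of a zero-error entanglement distillation protocol for ρ equals 1; consequently the zero-error distillable entanglement D_0(ρ) = lim_{l→∞} (1/l) log d(l,ρ) equals 0. -/
open scoped ComplexOrder

/-- Kraus characterization of quantum channels (CPTP maps). -/
def IsCPTP {ι κ : Type*} [Fintype ι] [DecidableEq ι] [Fintype κ] [DecidableEq κ]
    (N : Matrix ι ι ℂ →ₗ[ℂ] Matrix κ κ ℂ) : Prop :=
  ∃ (m : ℕ) (G : Fin m → Matrix κ ι ℂ),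
    (∀ a, N a = ∑ j, G j * a * (G j).conjTranspose) ∧
      (∑ j, (G j).conjTranspose * G j = 1)

/-- `ρ^{⊗l}` of a bipartite state, regrouped to the cut `H_A^{⊗l} : H_B^{⊗l}`. -/
def tensorPowBip {α β : Type*} (l : ℕ) (ρ : Matrix (α × β) (α × β) ℂ) :
    Matrix ((Fin l → α) × (Fin l → β)) ((Fin l → α) × (Fin l → β)) ℂ :=
  Matrix.of fun p q => ∏ i, ρ (p.1 i, p.2 i) (q.1 i, q.2 i)

/-- `d(l,ρ)`: the maximal `k` admitting an `(l,k)` zero-error entanglement distillation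
protocol for `ρ`, i.e. a CPTP map `D` which (as any LOCC operation) maps separable
states to separable states and satisfies `⟨φ_k, D(ρ^{⊗l}) φ_k⟩ = 1`. -/
noncomputable def dZeroError {α β : Type*} [Fintype α] [DecidableEq α] [Fintype β]
    [DecidableEq β] (l : ℕ) (ρ : Matrix (α × β) (α × β) ℂ) : ℕ :=
  sSup {k : ℕ | 0 < k ∧
    ∃ D : Matrix ((Fin l → α) × (Fin l → β)) ((Fin l → α) × (Fin l → β)) ℂ →ₗ[ℂ]
        Matrix (Fin k × Fin k) (Fin k × Fin k) ℂ,
      IsCPTP D ∧ (∀ σ, IsState σ → SepState σ → SepState (D σ)) ∧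
      ∑ p, ∑ q, (starRingEnd ℂ) (maxEntVec k p) * (D (tensorPowBip l ρ)) p q *
        maxEntVec k q = 1}

/-- The zero-error distillable entanglement `D₀(ρ) = lim (1/l) log d(l,ρ)`. -/
noncomputable def D0 {α β : Type*} [Fintype α] [DecidableEq α] [Fintype β]
    [DecidableEq β] (ρ : Matrix (α × β) (α × β) ℂ) : ℝ :=
  Filter.limsup (fun l : ℕ => Real.logb 2 (dZeroError l ρ) / l) Filter.atTop

/-!
A faithful state satisfies `ε • 1 ≤ ρ` for some `ε > 0`. Since `ρ^{⊗l}` is a Hadamard product of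
copies of `ρ`, the Schur product theorem makes it monotone in `ρ`, so `ρ^{⊗l}` dominates `c` times
the maximally mixed state for some `c > 0`. That state is separable, hence so is its image under a
separability-preserving channel, and its overlap with `φ_k` is at most `1/k`; the remaining part
has trace `1 - c`. A fidelity of `1` therefore forces `1 ≤ c/k + (1 - c)`, i.e. `k ≤ 1`.
-/

open Matrix
open scoped MatrixOrder

section LoewnerOrder

variable {n : Type*} [Fintype n] [DecidableEq n]

theorem le_re_trace_smul_one {A : Matrix n n ℂ} (hA : 0 ≤ A) : A ≤ (A.trace.re : ℂ) • 1 := by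
  have hH : A.IsHermitian := hA.posSemidef.isHermitian
  have h := (le_algebraMap_iff_spectrum_le (r := A.trace.re) hH.isSelfAdjoint).mpr ?_
  · simpa [Algebra.algebraMap_eq_smul_one, Complex.coe_smul] using h
  rw [hH.spectrum_real_eq_range_eigenvalues]
  rintro _ ⟨i, rfl⟩
  rw [hH.trace_eq_sum_eigenvalues, Complex.re_sum]
  simp only [Complex.coe_algebraMap, Complex.ofReal_re]
  exact Finset.single_le_sum (fun j _ => hA.posSemidef.eigenvalues_nonneg j) (Finset.mem_univ i)

theorem trace_mul_nonneg_of_nonneg {A B : Matrix n n ℂ} (hA : 0 ≤ A) (hB : 0 ≤ B) :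
    0 ≤ (A * B).trace := by
  obtain ⟨b, rfl⟩ := CStarAlgebra.nonneg_iff_eq_star_mul_self.mp hB
  rw [← Matrix.mul_assoc, trace_mul_cycle, star_eq_conjTranspose]
  exact (hA.posSemidef.mul_mul_conjTranspose_same b).trace_nonneg

theorem re_trace_mul_le_of_nonneg {A B : Matrix n n ℂ} (hA : 0 ≤ A) (hB : 0 ≤ B) :
    (A * B).trace.re ≤ A.trace.re * B.trace.re := by
  have h := trace_mul_nonneg_of_nonneg (sub_nonneg.mpr (le_re_trace_smul_one hA)) hB
  rw [sub_mul, trace_sub, smul_mul, one_mul, trace_smul, sub_nonneg, Complex.le_def] at h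
  simpa using h.1

theorem re_star_dotProduct_mulVec_le {A : Matrix n n ℂ} (hA : 0 ≤ A) (x : n → ℂ) :
    (star x ⬝ᵥ A *ᵥ x).re ≤ A.trace.re * (star x ⬝ᵥ x).re := by
  have h := (sub_nonneg.mpr (le_re_trace_smul_one hA)).posSemidef.dotProduct_mulVec_nonneg x
  rw [sub_mulVec, dotProduct_sub, smul_mulVec, one_mulVec, dotProduct_smul, sub_nonneg,
    Complex.le_def] at h
  simpa using h.1

end LoewnerOrder

section FinsetHadamard

variable {ι n : Type*}

def finsetHadamard (s : Finset ι) (A : ι → Matrix n n ℂ) : Matrix n n ℂ :=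
  of fun p q => ∏ i ∈ s, A i p q

theorem finsetHadamard_empty (A : ι → Matrix n n ℂ) :
    finsetHadamard ∅ A = vecMulVec (fun _ => 1) (star fun _ => 1) := by
  ext p q
  simp [finsetHadamard, vecMulVec]

theorem finsetHadamard_insert [DecidableEq ι] {s : Finset ι} {a : ι} (ha : a ∉ s)
    (A : ι → Matrix n n ℂ) : finsetHadamard (insert a s) A = A a ⊙ finsetHadamard s A := by
  ext p q
  simp [finsetHadamard, Finset.prod_insert ha]

theorem hadamard_le_hadamard {A A' B B' : Matrix n n ℂ} (hA : 0 ≤ A) (hAA' : A ≤ A')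
    (hB : 0 ≤ B) (hBB' : B ≤ B') : A ⊙ B ≤ A' ⊙ B' := by
  have h : A' ⊙ B' - A ⊙ B = (A' - A) ⊙ B' + A ⊙ (B' - B) := by
    ext i j; simp only [Matrix.sub_apply, Matrix.add_apply, hadamard_apply]; ring
  rw [← sub_nonneg, h]
  exact add_nonneg ((sub_nonneg.mpr hAA').posSemidef.hadamard (hB.trans hBB').posSemidef).nonneg
    (hA.posSemidef.hadamard (sub_nonneg.mpr hBB').posSemidef).nonneg

theorem finsetHadamard_nonneg [Fintype n] (s : Finset ι) {A : ι → Matrix n n ℂ}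
    (hA : ∀ i, 0 ≤ A i) : 0 ≤ finsetHadamard s A := by
  classical
  induction s using Finset.induction_on with
  | empty => exact (finsetHadamard_empty A ▸ posSemidef_vecMulVec_self_star _).nonneg
  | insert a s ha ih =>
    rw [finsetHadamard_insert ha]
    exact ((hA a).posSemidef.hadamard ih.posSemidef).nonneg

theorem finsetHadamard_mono [Fintype n] (s : Finset ι) {A B : ι → Matrix n n ℂ}
    (hA : ∀ i, 0 ≤ A i) (hAB : ∀ i, A i ≤ B i) : finsetHadamard s A ≤ finsetHadamard s B := by
  classical
  induction s using Finset.induction_on with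
  | empty => rw [finsetHadamard_empty, finsetHadamard_empty]
  | insert a s ha ih =>
    rw [finsetHadamard_insert ha, finsetHadamard_insert ha]
    exact hadamard_le_hadamard (hA a) (hAB a) (finsetHadamard_nonneg s hA) ih

end FinsetHadamard

section TensorPower

variable {α β : Type*}

theorem tensorPowBip_eq_finsetHadamard (l : ℕ) (ρ : Matrix (α × β) (α × β) ℂ) :
    tensorPowBip l ρ = finsetHadamard Finset.univ fun i =>
      ρ.submatrix (fun p => (p.1 i, p.2 i)) (fun p => (p.1 i, p.2 i)) :=
  rfl

theorem tensorPowBip_mono [Fintype α] [Fintype β] (l : ℕ) {A B : Matrix (α × β) (α × β) ℂ}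
    (hA : 0 ≤ A) (hAB : A ≤ B) : tensorPowBip l A ≤ tensorPowBip l B := by
  rw [tensorPowBip_eq_finsetHadamard, tensorPowBip_eq_finsetHadamard]
  refine finsetHadamard_mono _ (fun i => (hA.posSemidef.submatrix _).nonneg) fun i => ?_
  exact le_iff.mpr ((le_iff.mp hAB).submatrix _)

theorem tensorPowBip_smul_one [DecidableEq α] [DecidableEq β] (l : ℕ) (c : ℂ) :
    tensorPowBip l (c • (1 : Matrix (α × β) (α × β) ℂ)) = c ^ l • 1 := by
  ext p q
  simp only [tensorPowBip, of_apply, Matrix.smul_apply, one_apply, smul_eq_mul, mul_ite, mul_one,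
    mul_zero, Finset.prod_ite_zero, Finset.prod_const, Finset.card_univ, Fintype.card_fin]
  congr 1
  simp [Prod.ext_iff, funext_iff, forall_and]

theorem trace_tensorPowBip [Fintype α] [Fintype β] (l : ℕ) (ρ : Matrix (α × β) (α × β) ℂ) :
    (tensorPowBip l ρ).trace = ρ.trace ^ l := by
  rw [trace, trace, ← Fin.prod_const, Fintype.prod_sum]
  exact (Fintype.sum_equiv (Equiv.arrowProdEquivProdArrow (Fin l) (fun _ => α) (fun _ => β))
    _ _ fun x => rfl).symm

end TensorPower

namespace IsCPTP

variable {ι κ : Type*} [Fintype ι] [DecidableEq ι] [Fintype κ] [DecidableEq κ]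
  {N : Matrix ι ι ℂ →ₗ[ℂ] Matrix κ κ ℂ}

theorem map_nonneg (hN : IsCPTP N) {a : Matrix ι ι ℂ} (ha : 0 ≤ a) : 0 ≤ N a := by
  obtain ⟨m, G, hG, -⟩ := hN
  rw [hG]
  exact Finset.sum_nonneg fun j _ => (ha.posSemidef.mul_mul_conjTranspose_same (G j)).nonneg

theorem trace_map (hN : IsCPTP N) (a : Matrix ι ι ℂ) : (N a).trace = a.trace := by
  obtain ⟨m, G, hG, hsum⟩ := hN
  simp_rw [hG, trace_sum, trace_mul_cycle _ a]
  rw [← trace_sum, ← Finset.sum_mul, hsum, one_mul]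

end IsCPTP

section MaxMixed

theorem prodOp_smul_one_smul_one {α β : Type*} [DecidableEq α] [DecidableEq β] (a b : ℂ) :
    prodOp (a • (1 : Matrix α α ℂ)) (b • (1 : Matrix β β ℂ)) = (a * b) • 1 := by
  ext p q
  simp only [prodOp, of_apply, Matrix.smul_apply, one_apply, Prod.ext_iff, smul_eq_mul]
  split_ifs <;> simp_all

noncomputable def maxMixed (n : Type*) [Fintype n] [DecidableEq n] : Matrix n n ℂ :=
  (Fintype.card n : ℂ)⁻¹ • 1

theorem isState_maxMixed (n : Type*) [Fintype n] [DecidableEq n] [Nonempty n] :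
    IsState (maxMixed n) :=
  ⟨PosSemidef.one.smul (inv_nonneg.mpr (Nat.cast_nonneg _)), by simp [maxMixed, trace_smul]⟩

theorem sepState_maxMixed {α β : Type*} [Fintype α] [DecidableEq α] [Fintype β] [DecidableEq β]
    [Nonempty α] [Nonempty β] : SepState (maxMixed (α × β)) :=
  subset_convexHull ℝ _ ⟨maxMixed α, maxMixed β, isState_maxMixed α, isState_maxMixed β, by
    rw [maxMixed, maxMixed, maxMixed, prodOp_smul_one_smul_one, Fintype.card_prod, Nat.cast_mul,
      mul_inv]⟩

theorem smul_maxMixed {n : Type*} [Fintype n] [DecidableEq n] [Nonempty n] (c : ℂ) :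
    (c * Fintype.card n) • maxMixed n = c • 1 := by
  rw [maxMixed, smul_smul, mul_assoc, mul_inv_cancel₀ (by simp), mul_one]

end MaxMixed

section MaxEntVec

theorem star_maxEntVec_dotProduct_mulVec (k : ℕ) (M : Matrix (Fin k × Fin k) (Fin k × Fin k) ℂ) :
    star (maxEntVec k) ⬝ᵥ M *ᵥ maxEntVec k = (k : ℂ)⁻¹ * ∑ i, ∑ j, M (i, i) (j, j) := by
  have hsq : ((1 / Real.sqrt k : ℝ) : ℂ) * ((1 / Real.sqrt k : ℝ) : ℂ) = (k : ℂ)⁻¹ := by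
    rw [← Complex.ofReal_mul, one_div_mul_one_div, Real.mul_self_sqrt k.cast_nonneg]
    push_cast; ring
  simp only [dotProduct, mulVec, maxEntVec, Fintype.sum_prod_type, Pi.star_apply, apply_ite star,
    star_zero, ite_mul, zero_mul, mul_ite, mul_zero, Finset.sum_ite_eq, Finset.mem_univ, if_true,
    Finset.mul_sum]
  refine Finset.sum_congr rfl fun i _ => ?_
  rw [Finset.sum_comm]
  refine Finset.sum_congr rfl fun j _ => ?_
  rw [Finset.sum_ite_eq, if_pos (Finset.mem_univ _), ← hsq, Complex.star_def, Complex.conj_ofReal]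
  ring

theorem star_maxEntVec_dotProduct_self {k : ℕ} (hk : k ≠ 0) :
    star (maxEntVec k) ⬝ᵥ maxEntVec k = 1 := by
  simpa [one_apply, hk] using star_maxEntVec_dotProduct_mulVec k 1

theorem re_star_maxEntVec_dotProduct_prodOp_le {k : ℕ} {σ τ : Matrix (Fin k) (Fin k) ℂ}
    (hσ : IsState σ) (hτ : IsState τ) :
    (star (maxEntVec k) ⬝ᵥ prodOp σ τ *ᵥ maxEntVec k).re ≤ (k : ℝ)⁻¹ := by
  have h := re_trace_mul_le_of_nonneg hσ.1.nonneg hτ.1.transpose.nonneg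
  rw [trace_transpose, hσ.2, hτ.2, Complex.one_re, mul_one] at h
  have hsum : ∑ i, ∑ j, prodOp σ τ (i, i) (j, j) = (σ * τᵀ).trace := by
    simp [prodOp, trace, mul_apply]
  rw [star_maxEntVec_dotProduct_mulVec, hsum, ← Complex.ofReal_natCast, ← Complex.ofReal_inv,
    Complex.re_ofReal_mul]
  simpa using mul_le_of_le_one_right (inv_nonneg.mpr k.cast_nonneg) h

theorem SepState.re_star_maxEntVec_dotProduct_le {k : ℕ}
    {M : Matrix (Fin k × Fin k) (Fin k × Fin k) ℂ} (hM : SepState M) :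
    (star (maxEntVec k) ⬝ᵥ M *ᵥ maxEntVec k).re ≤ (k : ℝ)⁻¹ := by
  have hlin : IsLinearMap ℝ fun M : Matrix (Fin k × Fin k) (Fin k × Fin k) ℂ =>
      (star (maxEntVec k) ⬝ᵥ M *ᵥ maxEntVec k).re :=
    ⟨fun x y => by simp [add_mulVec], fun c x => by simp [smul_mulVec, Complex.real_smul]⟩
  refine convexHull_min ?_ (convex_halfSpace_le hlin _) hM
  rintro _ ⟨σ, τ, hσ, hτ, rfl⟩
  exact re_star_maxEntVec_dotProduct_prodOp_le hσ hτ

end MaxEntVec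

theorem Matrix.PosDef.exists_pos_smul_one_le {n : Type*} [Fintype n] [DecidableEq n] [Nonempty n]
    {ρ : Matrix n n ℂ} (hρ : ρ.PosDef) : ∃ ε : ℝ, 0 < ε ∧ (ε : ℂ) • (1 : Matrix n n ℂ) ≤ ρ := by
  obtain ⟨ε, hε, hle⟩ := (CFC.exists_pos_algebraMap_le_iff hρ.isHermitian.isSelfAdjoint).mpr
    fun x hx => hρ.isStrictlyPositive.spectrum_pos hx
  exact ⟨ε, hε, by simpa [Algebra.algebraMap_eq_smul_one, Complex.coe_smul] using hle⟩

theorem sum_sum_conj_mul_mul_eq_star_dotProduct_mulVec {n : Type*} [Fintype n]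
    (M : Matrix n n ℂ) (x : n → ℂ) :
    ∑ p, ∑ q, (starRingEnd ℂ) (x p) * M p q * x q = star x ⬝ᵥ M *ᵥ x := by
  simp [dotProduct, mulVec, Finset.mul_sum, mul_assoc]

section TraceChannel

variable (ι : Type*) [Fintype ι]

noncomputable def traceChannel : Matrix ι ι ℂ →ₗ[ℂ] Matrix (Fin 1 × Fin 1) (Fin 1 × Fin 1) ℂ :=
  (traceLinearMap ι ℂ ℂ).smulRight 1

theorem traceChannel_apply (a : Matrix ι ι ℂ) : traceChannel ι a = a.trace • 1 :=
  rfl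

theorem isCPTP_traceChannel [DecidableEq ι] : IsCPTP (traceChannel ι) := by
  let e := (Fintype.equivFin ι).symm
  refine ⟨Fintype.card ι, fun j => single default (e j) 1, fun a => ?_, ?_⟩
  · simp only [traceChannel_apply, conjTranspose_single, star_one, single_mul_mul_single,
      mul_one, one_mul]
    rw [Equiv.sum_comp e fun i => single default default (a i i)]
    ext p q
    simp [Matrix.sum_apply, Subsingleton.elim p default, Subsingleton.elim q default, trace]
  · simp only [conjTranspose_single, star_one, single_mul_single_same, mul_one]
    rw [Equiv.sum_comp e fun i => single i i 1, sum_single_one]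

theorem sepState_traceChannel {σ : Matrix ι ι ℂ} (hσ : σ.trace = 1) :
    SepState (traceChannel ι σ) := by
  rw [traceChannel_apply, hσ, one_smul]
  simpa [maxMixed] using sepState_maxMixed (α := Fin 1) (β := Fin 1)

theorem star_maxEntVec_dotProduct_traceChannel {T : Matrix ι ι ℂ} (hT : T.trace = 1) :
    star (maxEntVec 1) ⬝ᵥ traceChannel ι T *ᵥ maxEntVec 1 = 1 := by
  rw [traceChannel_apply, hT, one_smul, one_mulVec, star_maxEntVec_dotProduct_self one_ne_zero]

end TraceChannel

theorem le_one_of_star_maxEntVec_dotProduct_eq_one {ι κ : Type*} [Fintype ι] [DecidableEq ι]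
    [Fintype κ] [DecidableEq κ] {T σ : Matrix (ι × κ) (ι × κ) ℂ} (hT : T.trace = 1)
    (hσ : IsState σ) (hσsep : SepState σ) {c : ℝ} (hc : 0 < c) (hcσ : (c : ℂ) • σ ≤ T) {k : ℕ}
    {D : Matrix (ι × κ) (ι × κ) ℂ →ₗ[ℂ] Matrix (Fin k × Fin k) (Fin k × Fin k) ℂ}
    (hD : IsCPTP D) (hDsep : ∀ σ, IsState σ → SepState σ → SepState (D σ))
    (hfid : star (maxEntVec k) ⬝ᵥ D T *ᵥ maxEntVec k = 1) : k ≤ 1 := by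
  rcases Nat.eq_zero_or_pos k with rfl | hk
  · exact zero_le_one
  set φ := maxEntVec k
  have hsplit : star φ ⬝ᵥ D T *ᵥ φ =
      c * (star φ ⬝ᵥ D σ *ᵥ φ) + star φ ⬝ᵥ D (T - (c : ℂ) • σ) *ᵥ φ := by
    conv_lhs => rw [← add_sub_cancel ((c : ℂ) • σ) T]
    rw [map_add, map_smul, add_mulVec, smul_mulVec, dotProduct_add, dotProduct_smul, smul_eq_mul]
  have hsep : (star φ ⬝ᵥ D σ *ᵥ φ).re ≤ (k : ℝ)⁻¹ :=
    (hDsep σ hσ hσsep).re_star_maxEntVec_dotProduct_le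
  have hrest : (star φ ⬝ᵥ D (T - (c : ℂ) • σ) *ᵥ φ).re ≤ 1 - c := by
    have h := re_star_dotProduct_mulVec_le (hD.map_nonneg (sub_nonneg.mpr hcσ)) φ
    rw [hD.trace_map, trace_sub, trace_smul, hT, hσ.2, star_maxEntVec_dotProduct_self hk.ne']
      at h
    simpa using h
  have h1 := congrArg Complex.re hsplit
  rw [hfid, Complex.add_re, Complex.re_ofReal_mul, Complex.one_re] at h1
  have hk1 : 1 ≤ (k : ℝ)⁻¹ := le_of_mul_le_mul_left
    (by linarith [mul_le_mul_of_nonneg_left hsep hc.le]) hc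
  exact_mod_cast (one_le_inv₀ (by positivity)).mp hk1

/-- for a state `ρ` in the relative interior of the set of bipartite
states (i.e. a faithful, full-rank state), `d(l,ρ) = 1` for every `l`, and hence the
zero-error distillable entanglement `D₀(ρ)` is `0`. -/
theorem stmt_10 {α β : Type*} [Fintype α] [DecidableEq α] [Fintype β] [DecidableEq β]
    [Nonempty α] [Nonempty β] (ρ : Matrix (α × β) (α × β) ℂ)
    (hpos : ρ.PosDef) (htr : ρ.trace = 1) :
    (∀ l : ℕ, 0 < l → dZeroError l ρ = 1) ∧ D0 ρ = 0 := by
  obtain ⟨ε, hε, hερ⟩ := hpos.exists_pos_smul_one_le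
  have hd : ∀ l, dZeroError l ρ = 1 := by
    intro l
    have hT : (tensorPowBip l ρ).trace = 1 := by rw [trace_tensorPowBip, htr, one_pow]
    have hdom : ((ε ^ l * Fintype.card ((Fin l → α) × (Fin l → β)) : ℝ) : ℂ) • maxMixed _ ≤
        tensorPowBip l ρ := by
      push_cast
      rw [smul_maxMixed, ← tensorPowBip_smul_one]
      exact tensorPowBip_mono l (PosSemidef.one.smul (Complex.zero_le_real.mpr hε.le)).nonneg hερ
    refine IsGreatest.csSup_eq ⟨⟨one_pos, traceChannel _, isCPTP_traceChannel _,
      fun σ hσ _ => sepState_traceChannel _ hσ.2, ?_⟩, ?_⟩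
    · rw [sum_sum_conj_mul_mul_eq_star_dotProduct_mulVec]
      exact star_maxEntVec_dotProduct_traceChannel _ hT
    · rintro k ⟨-, D, hD, hDsep, hfid⟩
      rw [sum_sum_conj_mul_mul_eq_star_dotProduct_mulVec] at hfid
      exact le_one_of_star_maxEntVec_dotProduct_eq_one hT (isState_maxMixed _) sepState_maxMixed
        (by positivity) hdom hD hDsep hfid
  exact ⟨fun l _ => hd l, by simp [D0, hd]⟩
end

section
/- Let {N_s}_{s∈S} be a finite qc-symmetrizable AVQC, i.e., there is a POVM {E_s}_{s∈S} on H such that M(a ⊗ b) := ∑_s tr(E_s a) N_s(b) satisfies M(a ⊗ b) = M(b ⊗ a) for all a, b ∈ B(H). Fix σ ∈ S(H) and define channels E_1(a) := ∑_s tr(E_s σ) N_s(a) and E_2(a) := ∑_s tr(E_s a) N_s(σ). Then for every l ∈ ℕ, every subspace F_l of H^{⊗l}, every encoder P ∈ C(F_l, H^{⊗l}) and decoder R ∈ C(K^{⊗l}, F_l), the entanglement fidelities agree: F_e(π_{F_l}, R ∘ E_1^{⊗l} ∘ P) = F_e(π_{F_l}, R ∘ E_2^{⊗l} ∘ P). 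-/
open scoped ComplexOrder

/-- The elementary tensor `a₁ ⊗ ⋯ ⊗ a_l` of matrices. -/
def elemTensor {ι : Type*} {l : ℕ} (a : Fin l → Matrix ι ι ℂ) :
    Matrix (Fin l → ι) (Fin l → ι) ℂ :=
  Matrix.of fun x y => ∏ i, a i (x i) (y i)

/-- The entanglement fidelity `F_e(π_{ℂᵏ}, Λ) = ⟨ψ, (id ⊗ Λ)(|ψ⟩⟨ψ|) ψ⟩`, where `ψ`
is the maximally entangled purification of the maximally mixed state on `ℂᵏ`. -/
noncomputable def entFidelity (k : ℕ)
    (Λ : Matrix (Fin k) (Fin k) ℂ →ₗ[ℂ] Matrix (Fin k) (Fin k) ℂ) : ℂ :=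
  ∑ p : Fin k × Fin k, ∑ q : Fin k × Fin k,
    (starRingEnd ℂ) (maxEntVec k p) *
      (Λ (Matrix.of fun a b =>
        maxEntVec k (p.1, a) * (starRingEnd ℂ) (maxEntVec k (q.1, b)))) p.2 q.2 *
      maxEntVec k q

/-- for a qc-symmetrizable AVQC `{N_s}` with symmetrizing POVM `{E_s}`,
a state `σ`, and the channels `E₁(a) = ∑_s tr(E_s σ) N_s(a)`,
`E₂(a) = ∑_s tr(E_s a) N_s(σ)`, the entanglement fidelities of `R ∘ E₁^{⊗l} ∘ P` and
`R ∘ E₂^{⊗l} ∘ P` coincide for every code `(P,R)`. -/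
theorem stmt_15 {ι κ S : Type*} [Fintype ι] [DecidableEq ι]
    [Fintype κ] [DecidableEq κ] [Fintype S]
    (Ns : S → (Matrix ι ι ℂ →ₗ[ℂ] Matrix κ κ ℂ)) (hNs : ∀ s, IsCPTP (Ns s))
    (E : S → Matrix ι ι ℂ) (hEpsd : ∀ s, (E s).PosSemidef) (hEsum : ∑ s, E s = 1)
    (hsym : ∀ a b : Matrix ι ι ℂ,
      ∑ s, (E s * a).trace • Ns s b = ∑ s, (E s * b).trace • Ns s a)
    (σ : Matrix ι ι ℂ) (hσ : σ.PosSemidef ∧ σ.trace = 1)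
    (E₁ E₂ : Matrix ι ι ℂ →ₗ[ℂ] Matrix κ κ ℂ)
    (hE₁ : ∀ a, E₁ a = ∑ s, (E s * σ).trace • Ns s a)
    (hE₂ : ∀ a, E₂ a = ∑ s, (E s * a).trace • Ns s σ)
    (l k : ℕ) (hl : 0 < l) (hk : 0 < k)
    (P : Matrix (Fin k) (Fin k) ℂ →ₗ[ℂ] Matrix (Fin l → ι) (Fin l → ι) ℂ)
    (R : Matrix (Fin l → κ) (Fin l → κ) ℂ →ₗ[ℂ] Matrix (Fin k) (Fin k) ℂ)
    (hP : IsCPTP P) (hR : IsCPTP R)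
    (T₁ T₂ : Matrix (Fin l → ι) (Fin l → ι) ℂ →ₗ[ℂ] Matrix (Fin l → κ) (Fin l → κ) ℂ)
    (hT₁ : ∀ a : Fin l → Matrix ι ι ℂ, T₁ (elemTensor a) = elemTensor fun i => E₁ (a i))
    (hT₂ : ∀ a : Fin l → Matrix ι ι ℂ, T₂ (elemTensor a) = elemTensor fun i => E₂ (a i)) :
    entFidelity k (R ∘ₗ T₁ ∘ₗ P) = entFidelity k (R ∘ₗ T₂ ∘ₗ P) := by

  have hE : E₁ = E₂ := by
    ext a
    rw [hE₁, hE₂, hsym]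
  have hstd : ∀ x y : Fin l → ι,
      elemTensor (fun i => Matrix.single (x i) (y i) (1:ℂ)) =
        Matrix.single x y 1 := by
    intro x y
    ext u v
    classical
    simp only [elemTensor, Matrix.of_apply, Matrix.single]
    rw [Finset.prod_boole]
    by_cases h : x = u ∧ y = v
    · simp [h.1, h.2]
    · have : ¬ ∀ i ∈ Finset.univ, x i = u i ∧ y i = v i := by
        intro hall
        exact h ⟨funext fun i => (hall i (Finset.mem_univ i)).1,
                 funext fun i => (hall i (Finset.mem_univ i)).2⟩
      simp only [this, if_false]
      symm
      rw [if_neg]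
      intro hc
      exact h ⟨hc.1, hc.2⟩
  have hkey : ∀ (x y : Fin l → ι) (c : ℂ),
      T₁ (Matrix.single x y c) = T₂ (Matrix.single x y c) := by
    intro x y c
    have hsmul : Matrix.single x y c = c • Matrix.single x y (1:ℂ) := by
      ext u v
      simp [Matrix.single, mul_ite]
    rw [hsmul, map_smul, map_smul, ← hstd, hT₁, hT₂, hE]
  have hT : T₁ = T₂ := by
    refine LinearMap.ext fun m => ?_
    rw [Matrix.matrix_eq_sum_single m]
    simp only [map_sum]
    exact Finset.sum_congr rfl fun x _ =>
      Finset.sum_congr rfl fun y _ => hkey x y (m x y)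
  rw [hT]
end

section
/- Let d ≥ 2 and {p_s}_{s∈S} ⊂ [0,1) be a finite collection. Consider the erasure channels E_{p_s}(x) := (1−p_s)x + p_s·tr(x)|e_{d+1}⟩⟨e_{d+1}| and the states ρ_1 = |e_1⟩⟨e_1|, ρ_2 = |e_2⟩⟨e_2| on ℂ^d. Then there exist no probability distributions r_1, r_2 on S with ∑_{s∈S} r_1(s) E_{p_s}(ρ_1) = ∑_{s∈S} r_2(s) E_{p_s}(ρ_2). In particular the AVQC {E_{p_s}}_{s∈S} is non-symmetrizable at block length 1 for the two-element set {ρ_1, ρ_2}. -/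
/-- The embedding of `B(ℂᵈ)` into `B(ℂᵈ⁺¹)`. -/
def embedMat (d : ℕ) (x : Matrix (Fin d) (Fin d) ℂ) :
    Matrix (Fin (d + 1)) (Fin (d + 1)) ℂ :=
  Matrix.of fun i j =>
    if hi : (i : ℕ) < d then if hj : (j : ℕ) < d then x ⟨i, hi⟩ ⟨j, hj⟩ else 0 else 0

/-- The quantum erasure channel `E_p : B(ℂᵈ) → B(ℂᵈ⁺¹)`. -/
noncomputable def erasure (d : ℕ) (p : ℝ) (x : Matrix (Fin d) (Fin d) ℂ) :
    Matrix (Fin (d + 1)) (Fin (d + 1)) ℂ :=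
  (((1 - p : ℝ)) : ℂ) • embedMat d x +
    ((p : ℝ) : ℂ) • x.trace • Matrix.single (Fin.last d) (Fin.last d) 1

/-!
The `(e₁, e₁)` entry of `∑ₛ r(s) E_{p_s}(x)` is `(∑ₛ r(s)(1 - p_s)) x₁₁`, since the erasure flag
`|e_{d+1}⟩⟨e_{d+1}|` does not touch it. For `ρ₂` this entry vanishes, while for `ρ₁` it is a
convex combination of the numbers `1 - p_s > 0`, hence positive.
-/

theorem embedMat_apply_castSucc (d : ℕ) (x : Matrix (Fin d) (Fin d) ℂ) (i j : Fin d) :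
    embedMat d x i.castSucc j.castSucc = x i j := by
  simp [embedMat]

theorem erasure_apply_castSucc (d : ℕ) (p : ℝ) (x : Matrix (Fin d) (Fin d) ℂ) (i j : Fin d) :
    erasure d p x i.castSucc j.castSucc = ((1 - p : ℝ) : ℂ) * x i j := by
  simp [erasure, embedMat_apply_castSucc,
    Matrix.single_apply_of_row_ne (Fin.castSucc_ne_last i).symm]

theorem sum_smul_erasure_apply_castSucc {S : Type*} [Fintype S] (d : ℕ) (p r : S → ℝ)
    (x : Matrix (Fin d) (Fin d) ℂ) (i j : Fin d) :
    (∑ s, ((r s : ℝ) : ℂ) • erasure d (p s) x) i.castSucc j.castSucc =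
      ((∑ s, r s * (1 - p s) : ℝ) : ℂ) * x i j := by
  simp only [Matrix.sum_apply, Matrix.smul_apply, erasure_apply_castSucc, smul_eq_mul]
  push_cast
  simp only [Finset.sum_mul, mul_assoc]

theorem sum_mul_pos_of_sum_eq_one {S : Type*} [Fintype S] {r f : S → ℝ}
    (hr0 : ∀ s, 0 ≤ r s) (hr1 : ∑ s, r s = 1) (hf : ∀ s, 0 < f s) :
    0 < ∑ s, r s * f s := by
  obtain ⟨s, hs⟩ : ∃ s, r s ≠ 0 := by
    by_contra! h
    simp [h] at hr1
  exact Finset.sum_pos' (fun t _ => mul_nonneg (hr0 t) (hf t).le)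
    ⟨s, Finset.mem_univ s, mul_pos ((hr0 s).lt_of_ne' hs) (hf s)⟩

/-- for erasure probabilities `p_s ∈ [0,1)` and the states
`ρ₁ = |e₁⟩⟨e₁|`, `ρ₂ = |e₂⟩⟨e₂|`, there are no probability distributions `r₁, r₂`
on `S` with `∑_s r₁(s) E_{p_s}(ρ₁) = ∑_s r₂(s) E_{p_s}(ρ₂)`; i.e. the erasure AVQC
is non-symmetrizable at block length one for `{ρ₁, ρ₂}`. -/
theorem stmt_18 (d : ℕ) (hd : 2 ≤ d) {S : Type*} [Fintype S]
    (p : S → ℝ) (hp : ∀ s, p s ∈ Set.Ico (0 : ℝ) 1)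
    (r₁ r₂ : S → ℝ) (hr₁0 : ∀ s, 0 ≤ r₁ s) (hr₁1 : ∑ s, r₁ s = 1) :
    ∑ s, ((r₁ s : ℝ) : ℂ) •
        erasure d (p s) (Matrix.single (⟨0, by omega⟩ : Fin d)
          (⟨0, by omega⟩ : Fin d) 1) ≠
      ∑ s, ((r₂ s : ℝ) : ℂ) •
        erasure d (p s) (Matrix.single (⟨1, by omega⟩ : Fin d)
          (⟨1, by omega⟩ : Fin d) 1) := by
  intro h
  have hentry := congrFun (congrFun h (Fin.castSucc ⟨0, by omega⟩)) (Fin.castSucc ⟨0, by omega⟩)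
  rw [sum_smul_erasure_apply_castSucc, sum_smul_erasure_apply_castSucc,
    Matrix.single_apply_same, Matrix.single_apply_of_row_ne (by simp), mul_one, mul_zero,
    Complex.ofReal_eq_zero] at hentry
  have hpos := sum_mul_pos_of_sum_eq_one hr₁0 hr₁1 (fun s => sub_pos.mpr (hp s).2)
  exact hpos.ne' hentry
end
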